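/- The function $\beta \mapsto I_1(\beta)/I_0(\beta)$ is strictly increasing on $[0,\infty)$, satisfies $I_1(0)/I_0(0) = 0$, and $I_1(\beta)/I_0(\beta) < 1$ for all $\beta \geq 0$. -/
import Mathlib


open Real MeasureTheory

/-- The modified Bessel function of the first kind of integer order `k`,
defined by its integral representation. -/
noncomputable def besselI (k : ℕ) (x : ℝ) : ℝ :=
  (1 / π) * ∫ θ in (0:ℝ)..π, Real.exp (x * Real.cos θ) * Real.cos (k * θ)

/- Auxiliary single integrals over `Ioc 0 π`. -/
noncomputable def J0 (c : ℝ) : ℝ := ∫ θ in Set.Ioc (0:ℝ) π, Real.exp (c * Real.cos θ)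
noncomputable def J1 (c : ℝ) : ℝ := ∫ θ in Set.Ioc (0:ℝ) π, Real.cos θ * Real.exp (c * Real.cos θ)

lemma besselI_zero_eq (x : ℝ) : besselI 0 x = (1/π) * J0 x := by
  rw [besselI, J0, intervalIntegral.integral_of_le pi_pos.le]
  norm_num

lemma besselI_one_eq (x : ℝ) : besselI 1 x = (1/π) * J1 x := by
  rw [besselI, J1, intervalIntegral.integral_of_le pi_pos.le]
  norm_num [mul_comm]

lemma contE (c : ℝ) : Continuous fun θ : ℝ => Real.exp (c * Real.cos θ) := by fun_prop

lemma intE (c : ℝ) : IntegrableOn (fun θ : ℝ => Real.exp (c * Real.cos θ)) (Set.Ioc 0 π) :=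
  ((contE c).continuousOn.integrableOn_compact (isCompact_Icc (a := (0:ℝ)) (b := π))).mono_set
    Set.Ioc_subset_Icc_self

lemma intCE (c : ℝ) :
    IntegrableOn (fun θ : ℝ => Real.cos θ * Real.exp (c * Real.cos θ)) (Set.Ioc 0 π) :=
  ((Real.continuous_cos.mul (contE c)).continuousOn.integrableOn_compact
    (isCompact_Icc (a := (0:ℝ)) (b := π))).mono_set Set.Ioc_subset_Icc_self

lemma J0_pos (x : ℝ) : 0 < J0 x := by
  rw [J0]
  refine (setIntegral_pos_iff_support_of_nonneg_ae ?_ (intE x)).2 ?_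
  · exact Filter.Eventually.of_forall fun θ => (Real.exp_pos _).le
  · have : Function.support (fun θ : ℝ => Real.exp (x * Real.cos θ)) = Set.univ := by
      ext θ; simp [Function.mem_support, (Real.exp_pos _).ne']
    rw [this, Set.univ_inter, Real.volume_Ioc]
    simp [pi_pos]

lemma besselI_zero_pos (x : ℝ) : 0 < besselI 0 x := by
  rw [besselI_zero_eq]
  exact mul_pos (by positivity) (J0_pos x)

/-- `J1 x < J0 x`: the mean of `cos` is strictly less than `1`. -/
lemma J1_lt_J0 (x : ℝ) : J1 x < J0 x := by
  have hint : IntegrableOn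
      (fun θ : ℝ => Real.exp (x * Real.cos θ) - Real.cos θ * Real.exp (x * Real.cos θ))
      (Set.Ioc 0 π) := (intE x).sub (intCE x)
  have h : 0 < J0 x - J1 x := by
    rw [J0, J1, ← integral_sub (intE x) (intCE x)]
    refine (setIntegral_pos_iff_support_of_nonneg_ae ?_ hint).2 ?_
    · refine Filter.Eventually.of_forall fun θ => ?_
      have h1 : Real.cos θ ≤ 1 := Real.cos_le_one θ
      have h2 : (0:ℝ) < Real.exp (x * Real.cos θ) := Real.exp_pos _
      simp only [Pi.zero_apply]
      nlinarith
    · refine lt_of_lt_of_le ?_ (measure_mono (s := Set.Ioo (0:ℝ) π) ?_)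
      · rw [Real.volume_Ioo]; simp [pi_pos]
      · intro θ hθ
        have hcos : Real.cos θ < 1 := by
          have := Real.cos_lt_cos_of_nonneg_of_le_pi (le_refl 0) hθ.2.le hθ.1
          simpa using this
        have h2 : (0:ℝ) < Real.exp (x * Real.cos θ) := Real.exp_pos _
        refine ⟨?_, Set.Ioo_subset_Ioc_self hθ⟩
        have hpos : (0:ℝ) < Real.exp (x * Real.cos θ) - Real.cos θ * Real.exp (x * Real.cos θ) := by
          nlinarith
        simp only [Function.mem_support]
        exact hpos.ne'
  linarith

/- The symmetrized kernel whose double integral gives the cross difference. -/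
noncomputable def Hk (a b : ℝ) (p : ℝ × ℝ) : ℝ :=
  (Real.cos p.1 - Real.cos p.2) *
    (Real.exp (b * Real.cos p.1) * Real.exp (a * Real.cos p.2)
      - Real.exp (a * Real.cos p.1) * Real.exp (b * Real.cos p.2))

lemma Hk_nonneg {a b : ℝ} (hab : a ≤ b) (p : ℝ × ℝ) : 0 ≤ Hk a b p := by
  rcases le_total (Real.cos p.2) (Real.cos p.1) with h | h
  · apply mul_nonneg (by linarith)
    rw [← Real.exp_add, ← Real.exp_add, sub_nonneg]
    exact Real.exp_le_exp.2 (by nlinarith)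
  · rw [Hk, ← neg_mul_neg]
    apply mul_nonneg (by linarith)
    rw [neg_sub, ← Real.exp_add, ← Real.exp_add, sub_nonneg]
    exact Real.exp_le_exp.2 (by nlinarith)

lemma Hk_pos {a b : ℝ} (hab : a < b) {p : ℝ × ℝ} (h : Real.cos p.2 < Real.cos p.1) :
    0 < Hk a b p := by
  apply mul_pos (by linarith)
  rw [← Real.exp_add, ← Real.exp_add, sub_pos]
  exact Real.exp_lt_exp.2 (by nlinarith)

lemma intProd (f g : ℝ → ℝ) (hf : Continuous f) (hg : Continuous g) :
    IntegrableOn (fun p : ℝ × ℝ => f p.1 * g p.2)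
      (Set.Ioc (0:ℝ) π ×ˢ Set.Ioc (0:ℝ) π) :=
  (((hf.comp continuous_fst).mul (hg.comp continuous_snd)).continuousOn.integrableOn_compact
    (isCompact_Icc.prod isCompact_Icc)).mono_set
    (Set.prod_mono Set.Ioc_subset_Icc_self Set.Ioc_subset_Icc_self)

lemma Hk_integral {a b : ℝ} :
    ∫ p in Set.Ioc (0:ℝ) π ×ˢ Set.Ioc (0:ℝ) π, Hk a b p =
      2 * (J1 b * J0 a - J1 a * J0 b) := by
  have key : ∀ (f g : ℝ → ℝ),
      ∫ p in Set.Ioc (0:ℝ) π ×ˢ Set.Ioc (0:ℝ) π, f p.1 * g p.2 =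
        (∫ θ in Set.Ioc (0:ℝ) π, f θ) * ∫ θ in Set.Ioc (0:ℝ) π, g θ := by
    intro f g
    rw [← setIntegral_prod_mul]
    rfl
  set f1 : ℝ → ℝ := fun θ => Real.cos θ * Real.exp (b * Real.cos θ) with hf1
  set f2 : ℝ → ℝ := fun θ => Real.cos θ * Real.exp (a * Real.cos θ) with hf2
  set g1 : ℝ → ℝ := fun θ => Real.exp (a * Real.cos θ) with hg1
  set g2 : ℝ → ℝ := fun θ => Real.exp (b * Real.cos θ) with hg2
  have hc1 : Continuous f1 := by fun_prop
  have hc2 : Continuous f2 := by fun_prop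
  have hd1 : Continuous g1 := by fun_prop
  have hd2 : Continuous g2 := by fun_prop
  have hH : ∀ p : ℝ × ℝ, Hk a b p =
      f1 p.1 * g1 p.2 - f2 p.1 * g2 p.2 - g2 p.1 * f2 p.2 + g1 p.1 * f1 p.2 := by
    intro p; simp only [Hk, hf1, hf2, hg1, hg2]; ring
  calc ∫ p in Set.Ioc (0:ℝ) π ×ˢ Set.Ioc (0:ℝ) π, Hk a b p
      = ∫ p in Set.Ioc (0:ℝ) π ×ˢ Set.Ioc (0:ℝ) π,
          (f1 p.1 * g1 p.2 - f2 p.1 * g2 p.2 - g2 p.1 * f2 p.2 + g1 p.1 * f1 p.2) := by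
        simp only [hH]
    _ = 2 * (J1 b * J0 a - J1 a * J0 b) := by
        have i1 := intProd f1 g1 hc1 hd1
        have i2 := intProd f2 g2 hc2 hd2
        have i3 := intProd g2 f2 hd2 hc2
        have i4 := intProd g1 f1 hd1 hc1
        have i12 : IntegrableOn (fun p : ℝ × ℝ => f1 p.1 * g1 p.2 - f2 p.1 * g2 p.2)
            (Set.Ioc (0:ℝ) π ×ˢ Set.Ioc (0:ℝ) π) := i1.sub i2
        have i123 : IntegrableOn
            (fun p : ℝ × ℝ => f1 p.1 * g1 p.2 - f2 p.1 * g2 p.2 - g2 p.1 * f2 p.2)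
            (Set.Ioc (0:ℝ) π ×ˢ Set.Ioc (0:ℝ) π) := i12.sub i3
        rw [integral_add i123 i4, integral_sub i12 i3, integral_sub i1 i2,
            key f1 g1, key f2 g2, key g2 f2, key g1 f1]
        simp only [J0, J1, hf1, hf2, hg1, hg2]
        ring

lemma contHk (a b : ℝ) : Continuous (Hk a b) := by
  unfold Hk; fun_prop

lemma Hk_integral_pos {a b : ℝ} (hab : a < b) :
    0 < ∫ p in Set.Ioc (0:ℝ) π ×ˢ Set.Ioc (0:ℝ) π, Hk a b p := by
  have hint : IntegrableOn (Hk a b) (Set.Ioc (0:ℝ) π ×ˢ Set.Ioc (0:ℝ) π) :=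
    ((contHk a b).continuousOn.integrableOn_compact (isCompact_Icc.prod isCompact_Icc)).mono_set
      (Set.prod_mono Set.Ioc_subset_Icc_self Set.Ioc_subset_Icc_self)
  refine (setIntegral_pos_iff_support_of_nonneg_ae
    (Filter.Eventually.of_forall fun p => Hk_nonneg hab.le p) hint).2 ?_
  have hsub : Set.Ioo (0:ℝ) (π/2) ×ˢ Set.Ioo (π/2) π ⊆
      Function.support (Hk a b) ∩ (Set.Ioc (0:ℝ) π ×ˢ Set.Ioc (0:ℝ) π) := by
    rintro ⟨θ, φ⟩ ⟨hθ, hφ⟩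
    have h1 : 0 < Real.cos θ :=
      Real.cos_pos_of_mem_Ioo ⟨by linarith [hθ.1, pi_pos], hθ.2⟩
    have h2 : Real.cos φ < 0 :=
      Real.cos_neg_of_pi_div_two_lt_of_lt hφ.1 (by linarith [hφ.2, pi_pos])
    refine ⟨(Hk_pos hab (by simpa using lt_trans h2 h1)).ne', ?_, ?_⟩
    · exact ⟨hθ.1, by linarith [hθ.2, pi_pos]⟩
    · exact ⟨by linarith [hφ.1, pi_pos], hφ.2.le⟩
  refine lt_of_lt_of_le ?_ (measure_mono hsub)
  rw [show (volume : Measure (ℝ × ℝ)) = (volume : Measure ℝ).prod volume from rfl,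
    Measure.prod_prod, Real.volume_Ioo, Real.volume_Ioo]
  have h1 : (0:ℝ) < π/2 - 0 := by linarith [pi_pos]
  have h2 : (0:ℝ) < π - π/2 := by linarith [pi_pos]
  exact ENNReal.mul_pos (by simp [ENNReal.ofReal_pos, pi_pos]) (by simp [ENNReal.ofReal_pos, pi_pos])

lemma cross {a b : ℝ} (hab : a < b) : J1 a * J0 b < J1 b * J0 a := by
  have h := Hk_integral_pos hab
  rw [Hk_integral] at h
  linarith

/-- `β ↦ I₁(β)/I₀(β)` is strictly increasing on `[0,∞)`, vanishes at `0`,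
and is everywhere less than `1`. -/
theorem stmt_8 :
    StrictMonoOn (fun β => besselI 1 β / besselI 0 β) (Set.Ici (0:ℝ)) ∧
    besselI 1 0 / besselI 0 0 = 0 ∧
    ∀ β : ℝ, 0 ≤ β → besselI 1 β / besselI 0 β < 1 := by
  refine ⟨?_, ?_, ?_⟩
  · intro a _ b _ hab
    have h0a := besselI_zero_pos a
    have h0b := besselI_zero_pos b
    rw [div_lt_div_iff₀ h0a h0b]
    have hc := cross hab
    have hπ : (0:ℝ) < 1/π := by positivity
    rw [besselI_one_eq, besselI_one_eq, besselI_zero_eq, besselI_zero_eq]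
    have key2 : (1/π * (1/π)) * (J1 a * J0 b) < (1/π * (1/π)) * (J1 b * J0 a) :=
      mul_lt_mul_of_pos_left hc (mul_pos hπ hπ)
    nlinarith [key2]
  · have : besselI 1 0 = 0 := by
      simp [besselI, integral_cos]
    simp [this]
  · intro β _
    rw [div_lt_one (besselI_zero_pos β), besselI_one_eq, besselI_zero_eq]
    have hπ : (0:ℝ) < 1/π := by positivity
    have := mul_lt_mul_of_pos_left (J1_lt_J0 β) hπ
    linarith
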